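/- arXiv:2103.13822 — 2 statements merged into one kernel-verified Lean document; each statement's English description precedes it below -/
import Mathlib

section
/- Let N ≥ 1, let Σ be an N×N real matrix with Σ[i,i] > 0 for every i, and set σ_i = √(Σ[i,i]) and r_{ij} = Σ[i,j]/(σ_i σ_j). Fix real constants a > 0 and β > 0, a function τ : {1,…,N} → ℕ, and vectors μ, p ∈ ℝ^N. For each index k define Δl̂_k = μ_k − a·β^{τ_k}·σ_k and μ̃_i^{(k)} = μ_i + (Σ[i,k]/σ_k²)·(Δl̂_k − μ_k). Then for any two indices k and k': ∑_i p_i·μ̃_i^{(k)} ≤ ∑_i p_i·μ̃_i^{(k')} if and only if β^{τ_k}·∑_i p_i·σ_i·r_{ik} ≥ β^{τ_{k'}}·∑_i p_i·σ_i·r_{ik'}. Consequently, an index k₁ minimizes k ↦ ∑_i p_i·μ̃_i^{(k)} if and only if it maximizes k ↦ β^{τ_k}·∑_i p_i·σ_i·r_{ik}. -/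
/-- First claim (Eq. 20) of Lemma 3 of FedGP: minimizing the weighted posterior mean
`k ↦ ∑ i, p i * μ̃ i ^{(k)}` is equivalent to maximizing the annealed weighted correlation
score `k ↦ β^{τ k} * ∑ i, p i * σ i * r i k`. -/
theorem stmt_5 {N : ℕ} (hN : 1 ≤ N) (V : Matrix (Fin N) (Fin N) ℝ)
    (hdiag : ∀ i, 0 < V i i)
    (σ : Fin N → ℝ) (hσ : ∀ i, σ i = Real.sqrt (V i i))
    (r : Fin N → Fin N → ℝ) (hr : ∀ i j, r i j = V i j / (σ i * σ j))
    (a β : ℝ) (ha : 0 < a) (hβ : 0 < β) (τ : Fin N → ℕ) (μ p : Fin N → ℝ)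
    (dl : Fin N → ℝ) (hdl : ∀ k, dl k = μ k - a * β ^ τ k * σ k)
    (postμ : Fin N → Fin N → ℝ)
    (hpostμ : ∀ k i, postμ k i = μ i + V i k / σ k ^ 2 * (dl k - μ k)) :
    (∀ k k' : Fin N,
      ∑ i, p i * postμ k i ≤ ∑ i, p i * postμ k' i ↔
        β ^ τ k' * ∑ i, p i * σ i * r i k' ≤ β ^ τ k * ∑ i, p i * σ i * r i k) ∧
    (∀ k₁ : Fin N,
      (∀ k, ∑ i, p i * postμ k₁ i ≤ ∑ i, p i * postμ k i) ↔
        (∀ k, β ^ τ k * ∑ i, p i * σ i * r i k ≤ β ^ τ k₁ * ∑ i, p i * σ i * r i k₁)) := by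
  have hσpos : ∀ i, 0 < σ i := fun i => by
    rw [hσ i]; exact Real.sqrt_pos.mpr (hdiag i)
  have hσsq : ∀ i, σ i ^ 2 = V i i := fun i => by
    rw [hσ i, Real.sq_sqrt (hdiag i).le]
  have key : ∀ k, ∑ i, p i * postμ k i
      = (∑ i, p i * μ i) - a * (β ^ τ k * ∑ i, p i * σ i * r i k) := by
    intro k
    rw [Finset.mul_sum, Finset.mul_sum, ← Finset.sum_sub_distrib]
    apply Finset.sum_congr rfl
    intro i _
    rw [hpostμ, hdl, hr]
    have h1 : σ i ≠ 0 := (hσpos i).ne'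
    have h2 : σ k ≠ 0 := (hσpos k).ne'
    field_simp
    ring
  constructor
  · intro k k'
    rw [key, key]
    constructor
    · intro h
      have := sub_le_sub_left (sub_le_sub_left h (∑ i, p i * μ i)) 0
      simp only [sub_sub_cancel] at this
      exact le_of_mul_le_mul_left (by linarith) ha
    · intro h; nlinarith
  · intro k₁
    constructor
    · intro h k
      have := h k
      rw [key, key] at this
      nlinarith
    · intro h k
      rw [key, key]
      nlinarith [h k]
end

section
/- Let N ≥ 1, let Σ be a symmetric N×N real matrix with Σ[i,i] > 0 for every i, set σ_i = √(Σ[i,i]) and r_{ij} = Σ[i,j]/(σ_i σ_j). Fix indices k₁ and k' with r_{k' k₁}² < 1, let β > 0, τ_{k'} ∈ ℕ, and p ∈ ℝ^N. Define Σ̃[i,j] = Σ[i,j] − Σ[i,k₁]·Σ[k₁,j]/Σ[k₁,k₁] and σ̃_{k'} = √(Σ̃[k',k']). Then β^{τ_{k'}} · (∑_{i=1}^{N} p_i·Σ̃[i,k']) / σ̃_{k'} = (β^{τ_{k'}} / √(1 − r_{k' k₁}²)) · ( ∑_{i=1}^{N} p_i·r_{i k'}·σ_i − r_{k₁ k'}·∑_{i=1}^{N}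 p_i·r_{i k₁}·σ_i ). -/
/-!
Conditioning the Gaussian process on client `k₁` replaces the covariance `V` by the Schur
complement `V i j - V i k₁ * V k₁ j / V k₁ k₁`. Its diagonal entry at `k'` is
`σ k' ^ 2 * (1 - r k' k₁ ^ 2)`, and its `p`-weighted column sum at `k'` is `σ k'` times the
bracket on the right-hand side, so the factor `σ k'` cancels.
-/

namespace Matrix

variable {ι : Type*} (V : Matrix ι ι ℝ)

noncomputable def stdDev (i : ι) : ℝ := √(V i i)

noncomputable def corr (i j : ι) : ℝ := V i j / (V.stdDev i * V.stdDev j)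

noncomputable def condCov (k : ι) : Matrix ι ι ℝ := fun i j => V i j - V i k * V k j / V k k

variable {V}

theorem stdDev_pos {i : ι} (hi : 0 < V i i) : 0 < V.stdDev i := Real.sqrt_pos.mpr hi

theorem stdDev_sq {i : ι} (hi : 0 ≤ V i i) : V.stdDev i ^ 2 = V i i := Real.sq_sqrt hi

theorem corr_mul_stdDev_left {i : ι} (j : ι) (hi : 0 < V i i) :
    V.corr i j * V.stdDev i = V i j / V.stdDev j := by
  rw [corr, mul_comm (V.stdDev i), ← div_div, div_mul_cancel₀ _ (stdDev_pos hi).ne']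

theorem condCov_apply_self (hV : V.IsSymm) {j k : ι} (hj : 0 < V j j) (hk : 0 < V k k) :
    V.condCov k j j = V j j * (1 - V.corr j k ^ 2) := by
  have hjk : V k j = V j k := hV.apply j k
  rw [condCov, corr, div_pow, mul_pow, stdDev_sq hj.le, stdDev_sq hk.le, hjk]
  field_simp

theorem sqrt_condCov_apply_self (hV : V.IsSymm) {j k : ι} (hj : 0 < V j j) (hk : 0 < V k k) :
    √(V.condCov k j j) = V.stdDev j * √(1 - V.corr j k ^ 2) := by
  rw [condCov_apply_self hV hj hk, Real.sqrt_mul hj.le, stdDev]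

theorem sum_mul_corr_mul_stdDev [Fintype ι] (hV : ∀ i, 0 < V i i) (p : ι → ℝ) (j : ι) :
    ∑ i, p i * V.corr i j * V.stdDev i = (∑ i, p i * V i j) / V.stdDev j := by
  simp only [mul_assoc, corr_mul_stdDev_left j (hV _), Finset.sum_div, mul_div_assoc]

theorem sum_mul_condCov [Fintype ι] (hV : ∀ i, 0 < V i i) (p : ι → ℝ) (j k : ι) :
    ∑ i, p i * V.condCov k i j =
      V.stdDev j * ((∑ i, p i * V.corr i j * V.stdDev i) -
        V.corr k j * ∑ i, p i * V.corr i k * V.stdDev i) := by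
  have hj := (stdDev_pos (hV j)).ne'
  have hk := (stdDev_pos (hV k)).ne'
  have hsum : ∑ i, p i * V.condCov k i j =
      ∑ i, p i * V i j - (∑ i, p i * V i k) * (V k j / V k k) := by
    simp only [condCov, mul_sub, Finset.sum_sub_distrib, mul_div_assoc, ← mul_assoc,
      Finset.sum_mul]
  rw [hsum, sum_mul_corr_mul_stdDev hV, sum_mul_corr_mul_stdDev hV, corr,
    ← stdDev_sq (hV k).le]
  field_simp

end Matrix

theorem stmt_8_general {N : ℕ} (V : Matrix (Fin N) (Fin N) ℝ)
    (hsymm : V.IsSymm) (hdiag : ∀ i, 0 < V i i)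
    (σ : Fin N → ℝ) (hσ : ∀ i, σ i = Real.sqrt (V i i))
    (r : Fin N → Fin N → ℝ) (hr : ∀ i j, r i j = V i j / (σ i * σ j))
    (k₁ k' : Fin N)
    (β : ℝ) (τk' : ℕ) (p : Fin N → ℝ)
    (Vpost : Matrix (Fin N) (Fin N) ℝ)
    (hVpost : ∀ i j, Vpost i j = V i j - V i k₁ * V k₁ j / V k₁ k₁)
    (σpost : ℝ) (hσpost : σpost = Real.sqrt (Vpost k' k')) :
    β ^ τk' * (∑ i, p i * Vpost i k') / σpost =
      β ^ τk' / Real.sqrt (1 - r k' k₁ ^ 2) *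
        ((∑ i, p i * r i k' * σ i) - r k₁ k' * ∑ i, p i * r i k₁ * σ i) := by
  obtain rfl : σ = V.stdDev := funext hσ
  obtain rfl : r = V.corr := funext₂ hr
  obtain rfl : Vpost = V.condCov k₁ := Matrix.ext hVpost
  rw [hσpost, Matrix.sqrt_condCov_apply_self hsymm (hdiag k') (hdiag k₁),
    Matrix.sum_mul_condCov hdiag, mul_left_comm, mul_div_mul_left _ _ (Matrix.stdDev_pos (hdiag k')).ne']
  ring

/-- Second claim (Eq. 21) of Lemma 3 of FedGP: the selection score of a candidate second
client `k'` computed with the posterior covariance `Σ̃` factorizes as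
`β^{τ k'} / √(1 − r k' k₁ ^ 2) * (∑ i, p i r i k' σ i − r k₁ k' ∑ i, p i r i k₁ σ i)`. -/
theorem stmt_8 {N : ℕ} (hN : 1 ≤ N) (V : Matrix (Fin N) (Fin N) ℝ)
    (hsymm : V.IsSymm) (hdiag : ∀ i, 0 < V i i)
    (σ : Fin N → ℝ) (hσ : ∀ i, σ i = Real.sqrt (V i i))
    (r : Fin N → Fin N → ℝ) (hr : ∀ i j, r i j = V i j / (σ i * σ j))
    (k₁ k' : Fin N) (hcorr : r k' k₁ ^ 2 < 1)
    (β : ℝ) (hβ : 0 < β) (τk' : ℕ) (p : Fin N → ℝ)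
    (Vpost : Matrix (Fin N) (Fin N) ℝ)
    (hVpost : ∀ i j, Vpost i j = V i j - V i k₁ * V k₁ j / V k₁ k₁)
    (σpost : ℝ) (hσpost : σpost = Real.sqrt (Vpost k' k')) :
    β ^ τk' * (∑ i, p i * Vpost i k') / σpost =
      β ^ τk' / Real.sqrt (1 - r k' k₁ ^ 2) *
        ((∑ i, p i * r i k' * σ i) - r k₁ k' * ∑ i, p i * r i k₁ * σ i) :=
  stmt_8_general V hsymm hdiag σ hσ r hr k₁ k' β τk' p Vpost hVpost σpost hσpost
end
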